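/- Let η > 0, τ > 0, d > 0 and T > η + d. Then ∫_{-∞}^{∞} (e^{i r T}/(r² + τ²)) g(r; η) sin(d r) dr = −(π/(iτ)) e^{-τ T} g(iτ; η) sinh(τ d), where g(·; η) is evaluated at the purely imaginary point iτ via its entire extension. -/

import Mathlib

/-!
Write `h(z) = e^{izT} g(z; η) sin(dz)`, an entire function once the removable singularity of `g`
at `0` is filled in. On the closed upper half-plane `|e^{izT}| = e^{-T Im z}`,
`|sin(dz)| ≤ e^{d Im z}` and `|g(z)| ≲ e^{η Im z}` away from `0`, so `T > η + d` makes `h`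
bounded there. Then `F(z) = (h(z) - h(iτ)) / (z² + τ²)` is holomorphic on the closed upper
half-plane and `O(|z|⁻²)`, so Cauchy's theorem on the rectangles `[-S, S] × [0, S]` gives
`∫ F = 0`, i.e. `∫ h(r) / (r² + τ²) dr = h(iτ) ∫ dr / (r² + τ²) = (π / τ) h(iτ)`.
-/

open MeasureTheory

/-- The entire (for `z ≠ 0`; the singularity at `0` is removable) function
`g(z; η) = (2/(η z⁴))(1 − cos(η z)) − sin(η z)/z³`. -/
noncomputable def gC (η : ℝ) (z : ℂ) : ℂ :=
  (2 / ((η : ℂ) * z ^ 4)) * (1 - Complex.cos ((η : ℂ) * z)) -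
    Complex.sin ((η : ℂ) * z) / z ^ 3

open Complex Filter Topology Set
open scoped Interval Real

namespace Complex

lemma norm_cos_le_exp_abs_im (w : ℂ) : ‖cos w‖ ≤ Real.exp |w.im| := by
  have h₁ : ‖exp (w * I)‖ ≤ Real.exp |w.im| := by
    rw [norm_exp]; gcongr; simpa using neg_le_abs w.im
  have h₂ : ‖exp (-w * I)‖ ≤ Real.exp |w.im| := by
    rw [norm_exp]; gcongr; simpa using le_abs_self w.im
  rw [cos, norm_div, Complex.norm_two]
  linarith [norm_add_le (exp (w * I)) (exp (-w * I))]

lemma norm_sin_le_exp_abs_im (w : ℂ) : ‖sin w‖ ≤ Real.exp |w.im| := by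
  have h₁ : ‖exp (w * I)‖ ≤ Real.exp |w.im| := by
    rw [norm_exp]; gcongr; simpa using neg_le_abs w.im
  have h₂ : ‖exp (-w * I)‖ ≤ Real.exp |w.im| := by
    rw [norm_exp]; gcongr; simpa using le_abs_self w.im
  rw [sin, norm_div, norm_mul, norm_I, mul_one, Complex.norm_two]
  linarith [norm_sub_le (exp (-w * I)) (exp (w * I))]

lemma norm_two_mul_one_sub_cos_sub_mul_sin_le {w : ℂ} (hw : ‖w‖ ≤ 1) :
    ‖2 * (1 - cos w) - w * sin w‖ ≤ ‖w‖ ^ 4 := by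
  have hcos := cos_bound hw
  have hsin := sin_bound hw
  have hw0 := norm_nonneg w
  have hw5 : ‖w‖ ^ 5 ≤ ‖w‖ ^ 4 := pow_le_pow_of_le_one hw0 hw (by norm_num)
  calc ‖2 * (1 - cos w) - w * sin w‖
      = ‖w ^ 4 / 6 - 2 * (cos w - (1 - w ^ 2 / 2)) - w * (sin w - (w - w ^ 3 / 6))‖ := by
        ring_nf
    _ ≤ ‖w‖ ^ 4 / 6 + 2 * (‖w‖ ^ 4 * (5 / 96)) + ‖w‖ * (‖w‖ ^ 5 / 100) := by
        refine (norm_sub_le _ _).trans (add_le_add ((norm_sub_le _ _).trans ?_) ?_)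
        · rw [norm_mul, norm_div, norm_pow, Complex.norm_two, show ‖(6 : ℂ)‖ = 6 by norm_num]
          gcongr
        · rw [norm_mul]; gcongr
    _ ≤ ‖w‖ ^ 4 := by nlinarith [pow_nonneg hw0 4]

end Complex

lemma integrable_inv_sq_add_sq {τ : ℝ} (hτ : τ ≠ 0) :
    Integrable fun x : ℝ => (x ^ 2 + τ ^ 2)⁻¹ := by
  have := (integrable_inv_one_add_sq.comp_div hτ).const_mul (τ ^ 2)⁻¹
  refine this.congr (Eventually.of_forall fun x => ?_)
  simp only
  field_simp
  ring

lemma integral_univ_inv_sq_add_sq {τ : ℝ} (hτ : 0 < τ) :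
    ∫ x : ℝ, (x ^ 2 + τ ^ 2)⁻¹ = π / τ := by
  have hfun : (fun x : ℝ => (x ^ 2 + τ ^ 2)⁻¹) =
      fun x => (τ ^ 2)⁻¹ * (1 + (x / τ) ^ 2)⁻¹ := by
    ext x
    field_simp
    ring
  rw [hfun, integral_const_mul, Measure.integral_comp_div (fun x => (1 + x ^ 2)⁻¹),
    integral_univ_inv_one_add_sq, abs_of_pos hτ, smul_eq_mul]
  field_simp

section Contour

variable {E : Type*} [NormedAddCommGroup E]

lemma integrable_of_norm_le_div_sq {f : ℝ → E} {R K : ℝ} (hf : Continuous f)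
    (hdecay : ∀ x, R ≤ |x| → ‖f x‖ ≤ K / x ^ 2) : Integrable f := by
  refine hf.locallyIntegrable.integrable_of_isBigO_cocompact
    (g := fun x : ℝ => (1 + x ^ 2)⁻¹) ?_
    (integrable_inv_one_add_sq.integrableAtFilter _)
  refine Asymptotics.IsBigO.of_bound (2 * |K|) ?_
  filter_upwards [tendsto_norm_cocompact_atTop.eventually_ge_atTop (max R 1)] with x hx
  rw [Real.norm_eq_abs] at hx
  have hx1 : 1 ≤ x ^ 2 := by nlinarith [le_max_right R 1, abs_nonneg x, sq_abs x]
  rw [norm_inv, Real.norm_of_nonneg (by positivity), ← div_eq_mul_inv]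
  calc ‖f x‖ ≤ K / x ^ 2 := hdecay x ((le_max_left R 1).trans hx)
    _ ≤ |K| / x ^ 2 := by gcongr; exact le_abs_self K
    _ ≤ 2 * |K| / (1 + x ^ 2) := by
        rw [div_le_div_iff₀ (by positivity) (by positivity)]
        nlinarith [abs_nonneg K]

variable [NormedSpace ℂ E]

lemma norm_intervalIntegral_le_of_differentiableOn_rect {F : ℂ → E} {S B : ℝ} (hS : 0 < S)
    (hF : DifferentiableOn ℂ F ([[-S, S]] ×ℂ [[0, S]]))
    (hB : ∀ z : ℂ, 0 ≤ z.im → S ≤ ‖z‖ → ‖F z‖ ≤ B) :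
    ‖∫ x in -S..S, F x‖ ≤ 4 * S * B := by
  have hrect := integral_boundary_rect_eq_zero_of_differentiableOn F (-S) (S + S * I)
    (by simpa using hF)
  simp only [neg_re, ofReal_re, neg_im, ofReal_im, neg_zero, ofReal_zero, zero_mul, add_zero,
    add_re, mul_re, I_re, mul_zero, I_im, mul_one, sub_zero, add_im, mul_im, zero_add] at hrect
  have htop : ‖∫ x in -S..S, F (x + S * I)‖ ≤ B * |S - -S| := by
    refine intervalIntegral.norm_integral_le_of_norm_le_const fun x _ => hB _ (by simp [hS.le]) ?_
    simpa [abs_of_pos hS] using abs_im_le_norm ((x : ℂ) + S * I)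
  have hside : ∀ a : ℝ, |a| = S →
      ‖I • ∫ y in (0 : ℝ)..S, F (a + y * I)‖ ≤ B * |S - 0| := by
    intro a ha
    rw [norm_smul, norm_I, one_mul]
    refine intervalIntegral.norm_integral_le_of_norm_le_const fun y hy => ?_
    rw [uIoc_of_le hS.le] at hy
    refine hB _ (by simpa using hy.1.le) ?_
    simpa [ha] using abs_re_le_norm ((a : ℂ) + y * I)
  have hsplit : ∫ x in -S..S, F x = (∫ x in -S..S, F (x + S * I))
      - I • (∫ y in (0 : ℝ)..S, F (S + y * I))
      + I • (∫ y in (0 : ℝ)..S, F ((-S : ℝ) + y * I)) := by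
    rw [← sub_eq_zero, ← hrect]
    abel
  rw [hsplit]
  have h1 := hside S (abs_of_pos hS)
  have h2 := hside (-S) (by rw [abs_neg, abs_of_pos hS])
  calc _ ≤ ‖∫ x in -S..S, F (x + S * I)‖ + ‖I • ∫ y in (0 : ℝ)..S, F (S + y * I)‖
        + ‖I • ∫ y in (0 : ℝ)..S, F ((-S : ℝ) + y * I)‖ :=
          (norm_add_le _ _).trans (by gcongr; exact norm_sub_le _ _)
    _ ≤ B * |S - -S| + B * |S - 0| + B * |S - 0| := by gcongr
    _ = 4 * S * B := by rw [sub_neg_eq_add, sub_zero, abs_of_pos (by linarith), abs_of_pos hS]; ring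

variable {F : ℂ → E} {R K : ℝ}

lemma integrable_ofReal_of_differentiableAt_of_norm_le_div_sq
    (hF : ∀ z : ℂ, 0 ≤ z.im → DifferentiableAt ℂ F z)
    (hdecay : ∀ z : ℂ, 0 ≤ z.im → R ≤ ‖z‖ → ‖F z‖ ≤ K / ‖z‖ ^ 2) :
    Integrable fun x : ℝ => F x := by
  have hcont : Continuous fun x : ℝ => F x := continuous_iff_continuousAt.2 fun x =>
    (hF x (by simp)).continuousAt.comp continuous_ofReal.continuousAt
  exact integrable_of_norm_le_div_sq hcont fun x hx => by
    simpa [sq_abs] using hdecay x (by simp) (by simpa using hx)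

theorem integral_eq_zero_of_differentiableAt_of_norm_le_div_sq
    (hF : ∀ z : ℂ, 0 ≤ z.im → DifferentiableAt ℂ F z)
    (hdecay : ∀ z : ℂ, 0 ≤ z.im → R ≤ ‖z‖ → ‖F z‖ ≤ K / ‖z‖ ^ 2) :
    ∫ x : ℝ, F x = 0 := by
  have hint := integrable_ofReal_of_differentiableAt_of_norm_le_div_sq hF hdecay
  have hrect : ∀ S, max R 1 ≤ S → ‖∫ x in -S..S, F x‖ ≤ 4 * |K| / S := by
    intro S hS
    have hS0 : 0 < S := one_pos.trans_le ((le_max_right R 1).trans hS)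
    refine (norm_intervalIntegral_le_of_differentiableOn_rect (B := |K| / S ^ 2) hS0
      (fun z hz => (hF z ?_).differentiableWithinAt) fun z him hz => ?_).trans_eq ?_
    · have := hz.2
      rw [mem_preimage, uIcc_of_le hS0.le] at this
      exact this.1
    · calc ‖F z‖ ≤ K / ‖z‖ ^ 2 := hdecay z him ((le_max_left R 1).trans (hS.trans hz))
        _ ≤ |K| / ‖z‖ ^ 2 := by gcongr; exact le_abs_self K
        _ ≤ |K| / S ^ 2 := by gcongr
    · field_simp
  have hlim := (intervalIntegral_tendsto_integral hint tendsto_neg_atTop_atBot tendsto_id).norm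
  have hbound : Tendsto (fun S : ℝ => 4 * |K| / S) atTop (𝓝 0) :=
    tendsto_const_nhds.div_atTop tendsto_id
  exact norm_le_zero_iff.1 (le_of_tendsto_of_tendsto hlim hbound
    (eventually_atTop.2 ⟨max R 1, hrect⟩))

end Contour

lemma norm_dslope_div_add_le {h : ℂ → ℂ} {c z : ℂ} {M : ℝ} (hc : c ≠ 0)
    (hz : 2 * ‖c‖ ≤ ‖z‖) (hM : ‖h z‖ ≤ M) :
    ‖dslope h c z / (z + c)‖ ≤ 4 * (M + ‖h c‖) / ‖z‖ ^ 2 := by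
  have hc0 := norm_pos_iff.2 hc
  have hsub : ‖z‖ / 2 ≤ ‖z - c‖ := by linarith [norm_sub_norm_le z c]
  have hadd : ‖z‖ / 2 ≤ ‖z + c‖ := by
    have := norm_sub_norm_le z (-c)
    rw [sub_neg_eq_add, norm_neg] at this
    linarith
  have hzc : z ≠ c := fun hzc => by rw [hzc] at hz; linarith
  have hnum : ‖h z - h c‖ ≤ M + ‖h c‖ := (norm_sub_le _ _).trans (by linarith)
  have hM0 : 0 ≤ M + ‖h c‖ := (norm_nonneg _).trans hnum
  calc ‖dslope h c z / (z + c)‖ = ‖h z - h c‖ / ‖z - c‖ / ‖z + c‖ := by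
        rw [dslope_of_ne _ hzc, slope_def_field, norm_div, norm_div]
    _ ≤ (M + ‖h c‖) / (‖z‖ / 2) / (‖z‖ / 2) := by
        have : 0 < ‖z‖ := by linarith
        gcongr
    _ = 4 * (M + ‖h c‖) / ‖z‖ ^ 2 := by ring

lemma div_ofReal_sq_add_sq_eq_dslope_div_add (h : ℂ → ℂ) (x : ℝ) {τ : ℝ} (hτ : τ ≠ 0) :
    h x / ((x : ℂ) ^ 2 + (τ : ℂ) ^ 2)
      = dslope h (I * τ) x / (x + I * τ) + h (I * τ) * (((x ^ 2 + τ ^ 2)⁻¹ : ℝ) : ℂ) := by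
  have hsub : (x : ℂ) - I * τ ≠ 0 := fun h0 => hτ (by simpa using congrArg im h0)
  have hadd : (x : ℂ) + I * τ ≠ 0 := fun h0 => hτ (by simpa using congrArg im h0)
  have hfac : ((x : ℂ) - I * τ) * (x + I * τ) = (x : ℂ) ^ 2 + (τ : ℂ) ^ 2 := by
    linear_combination (-(τ : ℂ) ^ 2) * I_sq
  rw [dslope_of_ne _ (sub_ne_zero.1 hsub), slope_def_field]
  push_cast
  rw [← hfac]
  field_simp
  ring

lemma integral_div_ofReal_sq_add_sq {h : ℂ → ℂ} (hh : Differentiable ℂ h) {τ R M : ℝ}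
    (hτ : 0 < τ) (hM : ∀ z : ℂ, 0 ≤ z.im → R ≤ ‖z‖ → ‖h z‖ ≤ M) :
    ∫ x : ℝ, h x / ((x : ℂ) ^ 2 + (τ : ℂ) ^ 2) = π / τ * h (I * τ) := by
  set c := I * τ
  have hnorm_c : ‖c‖ = τ := by simp [c, abs_of_pos hτ]
  have hc_im : c.im = τ := by simp [c]
  have hadd_ne : ∀ z : ℂ, 0 ≤ z.im → z + c ≠ 0 := fun z hz h0 => by
    have := congrArg im h0
    simp only [add_im, hc_im, zero_im] at this
    linarith
  set F : ℂ → ℂ := fun z => dslope h c z / (z + c)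
  have hFdiff : ∀ z : ℂ, 0 ≤ z.im → DifferentiableAt ℂ F z := by
    have hdslope : Differentiable ℂ (dslope h c) := by
      rw [← differentiableOn_univ] at hh ⊢
      exact (differentiableOn_dslope univ_mem).2 hh
    exact fun z hz => (hdslope z).div (by fun_prop) (hadd_ne z hz)
  have hFdecay : ∀ z : ℂ, 0 ≤ z.im → max R (2 * τ) ≤ ‖z‖ →
      ‖F z‖ ≤ 4 * (M + ‖h c‖) / ‖z‖ ^ 2 := fun z him hz =>
    norm_dslope_div_add_le (by simpa [c] using hτ.ne') (hnorm_c ▸ (le_max_right _ _).trans hz)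
      (hM z him ((le_max_left _ _).trans hz))
  have hF0 : ∫ x : ℝ, F x = 0 :=
    integral_eq_zero_of_differentiableAt_of_norm_le_div_sq hFdiff hFdecay
  have hsplit (x : ℝ) : h x / ((x : ℂ) ^ 2 + (τ : ℂ) ^ 2)
      = F x + h c * (((x ^ 2 + τ ^ 2)⁻¹ : ℝ) : ℂ) :=
    div_ofReal_sq_add_sq_eq_dslope_div_add h x hτ.ne'
  have hinv : Integrable fun x : ℝ => (((x ^ 2 + τ ^ 2)⁻¹ : ℝ) : ℂ) :=
    (integrable_inv_sq_add_sq hτ.ne').ofReal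
  rw [integral_congr_ae (Eventually.of_forall hsplit), integral_add
    (integrable_ofReal_of_differentiableAt_of_norm_le_div_sq hFdiff hFdecay)
    (hinv.const_mul _), hF0, integral_const_mul, integral_complex_ofReal,
    integral_univ_inv_sq_add_sq hτ]
  push_cast
  ring

lemma gC_eq_div (η : ℝ) (z : ℂ) :
    gC η z = (2 * (1 - cos (η * z)) - η * z * sin (η * z)) / (η * z ^ 4) := by
  rcases eq_or_ne (η : ℂ) 0 with hη | hη
  · simp [gC, hη]
  rcases eq_or_ne z 0 with hz | hz
  · simp [gC, hz]
  rw [gC]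
  field_simp

lemma norm_gC_le_of_norm_le {η : ℝ} (hη : 0 < η) {z : ℂ} (hz : ‖z‖ ≤ η⁻¹) :
    ‖gC η z‖ ≤ η ^ 3 := by
  rcases eq_or_ne z 0 with rfl | hz0
  · simp [gC]; positivity
  have hw : ‖(η : ℂ) * z‖ = η * ‖z‖ := by
    rw [norm_mul, norm_real, Real.norm_of_nonneg hη.le]
  have hw1 : ‖(η : ℂ) * z‖ ≤ 1 := by
    calc ‖(η : ℂ) * z‖ = η * ‖z‖ := hw
      _ ≤ η * η⁻¹ := by gcongr
      _ = 1 := mul_inv_cancel₀ hη.ne'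
  have hnum := norm_two_mul_one_sub_cos_sub_mul_sin_le hw1
  rw [hw] at hnum
  rw [gC_eq_div, norm_div, norm_mul, norm_pow, norm_real, Real.norm_of_nonneg hη.le]
  calc _ ≤ (η * ‖z‖) ^ 4 / (η * ‖z‖ ^ 4) := by gcongr
    _ = η ^ 3 := by field_simp

lemma norm_gC_le {η : ℝ} (hη : 0 < η) {z : ℂ} (hz : 1 ≤ ‖z‖) :
    ‖gC η z‖ ≤ (4 / η + 1) * Real.exp (η * |z.im|) := by
  have him : |((η : ℂ) * z).im| = η * |z.im| := by
    simp [abs_mul, abs_of_pos hη]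
  have hcos := norm_cos_le_exp_abs_im ((η : ℂ) * z)
  have hsin := norm_sin_le_exp_abs_im ((η : ℂ) * z)
  rw [him] at hcos hsin
  have hE : 1 ≤ Real.exp (η * |z.im|) := Real.one_le_exp (by positivity)
  have hz3 : 1 ≤ ‖z‖ ^ 3 := one_le_pow₀ hz
  have hz4 : 1 ≤ ‖z‖ ^ 4 := one_le_pow₀ hz
  have h1 : ‖2 / ((η : ℂ) * z ^ 4) * (1 - cos (η * z))‖ ≤
      2 / η * (2 * Real.exp (η * |z.im|)) := by
    rw [norm_mul, norm_div, norm_mul, norm_pow, norm_real, Real.norm_of_nonneg hη.le,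
      Complex.norm_two]
    gcongr ?_ * ?_
    · exact div_le_div_of_nonneg_left zero_le_two hη (le_mul_of_one_le_right hη.le hz4)
    · linarith [norm_sub_le (1 : ℂ) (cos (η * z)), norm_one (α := ℂ)]
  have h2 : ‖sin (η * z) / z ^ 3‖ ≤ Real.exp (η * |z.im|) := by
    rw [norm_div, norm_pow]
    exact (div_le_self (norm_nonneg _) hz3).trans hsin
  calc ‖gC η z‖ ≤ 2 / η * (2 * Real.exp (η * |z.im|)) + Real.exp (η * |z.im|) :=
        (norm_sub_le _ _).trans (add_le_add h1 h2)
    _ = (4 / η + 1) * Real.exp (η * |z.im|) := by ring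

-- `gC η 0 = 0` is a junk value of `x / 0 = 0`; `gExt η` is the entire function `g(·; η)`.
noncomputable def gExt (η : ℝ) : ℂ → ℂ :=
  Function.update (gC η) 0 (limUnder (𝓝[≠] 0) (gC η))

lemma gExt_of_ne_zero (η : ℝ) {z : ℂ} (hz : z ≠ 0) : gExt η z = gC η z :=
  Function.update_of_ne hz _ _

lemma differentiableAt_gC {η : ℝ} (hη : 0 < η) {z : ℂ} (hz : z ≠ 0) :
    DifferentiableAt ℂ (gC η) z := by
  have hηz : (η : ℂ) * z ^ 4 ≠ 0 := mul_ne_zero (ofReal_ne_zero.2 hη.ne') (pow_ne_zero _ hz)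
  have hz3 : z ^ 3 ≠ 0 := pow_ne_zero _ hz
  unfold gC
  fun_prop (disch := assumption)

lemma differentiable_gExt {η : ℝ} (hη : 0 < η) : Differentiable ℂ (gExt η) := by
  have hball : DifferentiableOn ℂ (gExt η) (Metric.ball 0 η⁻¹) := by
    refine differentiableOn_update_limUnder_of_bddAbove
      (Metric.ball_mem_nhds 0 (inv_pos.2 hη))
      (fun z hz => (differentiableAt_gC hη hz.2).differentiableWithinAt) ⟨η ^ 3, ?_⟩
    rintro _ ⟨z, ⟨hz, -⟩, rfl⟩
    exact norm_gC_le_of_norm_le hη (mem_ball_zero_iff.1 hz).le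
  intro z
  rcases eq_or_ne z 0 with rfl | hz
  · exact hball.differentiableAt (Metric.ball_mem_nhds 0 (by positivity))
  · refine (differentiableAt_gC hη hz).congr_of_eventuallyEq ?_
    filter_upwards [compl_singleton_mem_nhds hz] with w hw
    exact gExt_of_ne_zero η hw

lemma norm_exp_mul_gC_mul_sin_le {η d T : ℝ} (hη : 0 < η) (hd : 0 ≤ d) (hT : η + d ≤ T)
    {z : ℂ} (him : 0 ≤ z.im) (hz : 1 ≤ ‖z‖) :
    ‖exp (I * z * T) * gC η z * sin (d * z)‖ ≤ 4 / η + 1 := by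
  have hexp : ‖exp (I * z * T)‖ = Real.exp (-(T * z.im)) := by
    rw [norm_exp]; congr 1; simp [mul_comm]
  have hsin : ‖sin (d * z)‖ ≤ Real.exp (d * z.im) := by
    simpa [abs_of_nonneg hd, abs_of_nonneg him] using norm_sin_le_exp_abs_im (d * z)
  have hg := norm_gC_le hη hz
  rw [abs_of_nonneg him] at hg
  calc ‖exp (I * z * T) * gC η z * sin (d * z)‖
      ≤ Real.exp (-(T * z.im)) * ((4 / η + 1) * Real.exp (η * z.im)) * Real.exp (d * z.im) := by
        rw [norm_mul, norm_mul, hexp]; gcongr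
    _ = (4 / η + 1) * Real.exp ((η + d - T) * z.im) := by
        rw [show (η + d - T) * z.im = -(T * z.im) + η * z.im + d * z.im by ring,
          Real.exp_add, Real.exp_add]
        ring
    _ ≤ (4 / η + 1) * 1 := by
        gcongr
        exact Real.exp_le_one_iff.2 (mul_nonpos_of_nonpos_of_nonneg (by linarith) him)
    _ = 4 / η + 1 := mul_one _

/-- for `η, τ, d > 0` and `T > η + d`,
`∫_{-∞}^{∞} (e^{i r T}/(r² + τ²)) g(r; η) sin(d r) dr = −(π/(iτ)) e^{-τT} g(iτ; η) sinh(τd)`. -/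
theorem residue_integral_one (η τ d T : ℝ) (hη : 0 < η) (hτ : 0 < τ) (hd : 0 < d)
    (hT : η + d < T) :
    ∫ r : ℝ,
        (Complex.exp (Complex.I * (r : ℂ) * (T : ℂ)) / ((r : ℂ) ^ 2 + (τ : ℂ) ^ 2)) *
          gC η (r : ℂ) * Complex.sin ((d : ℂ) * (r : ℂ)) =
      -((Real.pi : ℂ) / (Complex.I * (τ : ℂ))) * Complex.exp (-(τ : ℂ) * (T : ℂ)) *
        gC η (Complex.I * (τ : ℂ)) * ((Real.sinh (τ * d) : ℝ) : ℂ) := by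
  set h : ℂ → ℂ := fun z => exp (I * z * T) * gExt η z * sin (d * z)
  have hdiff : Differentiable ℂ h := by
    have := differentiable_gExt hη
    fun_prop
  have hbound : ∀ z : ℂ, 0 ≤ z.im → 1 ≤ ‖z‖ → ‖h z‖ ≤ 4 / η + 1 := by
    intro z him hz
    simp only [h, gExt_of_ne_zero η (norm_pos_iff.1 (one_pos.trans_le hz))]
    exact norm_exp_mul_gC_mul_sin_le hη hd.le hT.le him hz
  have hintegrand : ∀ᵐ r : ℝ, (exp (I * r * T) / ((r : ℂ) ^ 2 + (τ : ℂ) ^ 2)) * gC η r *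
      sin (d * r) = h r / ((r : ℂ) ^ 2 + (τ : ℂ) ^ 2) := by
    filter_upwards [compl_mem_ae_iff.2 (measure_singleton (0 : ℝ))] with r hr
    simp only [h, gExt_of_ne_zero η (ofReal_ne_zero.2 hr)]
    ring
  have hsin : sin (d * (I * τ)) = Real.sinh (τ * d) * I := by
    rw [ofReal_sinh, ← sin_mul_I]; push_cast; ring_nf
  have hexp : I * (I * τ) * T = -(τ : ℂ) * T := by linear_combination (τ * T : ℂ) * I_sq
  rw [integral_congr_ae hintegrand, integral_div_ofReal_sq_add_sq hdiff hτ hbound]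
  simp only [h, gExt_of_ne_zero η (mul_ne_zero I_ne_zero (ofReal_ne_zero.2 hτ.ne')), hsin, hexp]
  field_simp
  rw [I_sq]
  ring
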